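/- For finite variable sets x and y and every n ≥ 1, n · Σ_{λ ⊢ n} e_λ(x) m_λ(y) = Σ_{k=0}^{n-1} (-1)^{n-k-1} p_{n-k}(x) p_{n-k}(y) · Σ_{λ ⊢ k} e_λ(x) m_λ(y). -/

import Mathlib

open MvPolynomial Finset

/-!
The sum `Σ_{λ ⊢ k} e_λ(x) m_λ(y)` is the `k`-th elementary symmetric function of the products
`x_i y_j`: both are the coefficient of `t^k` in
`∏_{i,j} (1 + x_i y_j t) = ∏_j Σ_k e_k(x) y_j^k t^k`, and grouping the terms of this product
by the multiset of indices `j` gives `e_λ(x) m_λ(y)`.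
Since also `p_k(x_i y_j) = p_k(x) p_k(y)`, the identity is Newton's identity for the
variables `x_i y_j`.
-/

section
variable {R : Type*} [CommSemiring R]

theorem PowerSeries.coeff_prod_one_add_C_mul_X {ι : Type*} (s : Finset ι) (v : ι → R)
    (k : ℕ) :
    coeff k (∏ i ∈ s, (1 + C (v i) * X)) = ∑ t ∈ s.powersetCard k, ∏ i ∈ t, v i := by
  classical
  simp_rw [prod_one_add, map_sum, mul_comm (C _) X, prod_mul_distrib, prod_const, ← map_prod,
    mul_comm (X ^ _), coeff_C_mul_X_pow, powersetCard_eq_filter, sum_filter]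
  exact sum_congr rfl fun t _ => by split_ifs <;> simp_all [eq_comm]

variable {σ τ : Type*} [Fintype σ] [Fintype τ]

theorem MvPolynomial.eval_esymm_eq_coeff_prod (v : σ → R) (k : ℕ) :
    eval v (esymm σ R k) =
      PowerSeries.coeff k (∏ i, (1 + PowerSeries.C (v i) * PowerSeries.X)) := by
  simp [PowerSeries.coeff_prod_one_add_C_mul_X, esymm]

theorem MvPolynomial.prod_one_add_C_mul_mul_X_eq_mk (v : σ → R) (u : R) :
    ∏ i, (1 + PowerSeries.C (v i * u) * PowerSeries.X) =
      PowerSeries.mk fun k => eval v (esymm σ R k) * u ^ k := by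
  ext k
  rw [PowerSeries.coeff_mk, eval_esymm_eq_coeff_prod, PowerSeries.coeff_prod_one_add_C_mul_X,
    PowerSeries.coeff_prod_one_add_C_mul_X, sum_mul]
  refine sum_congr rfl fun t ht => ?_
  rw [prod_mul_distrib, prod_const, (mem_powersetCard.1 ht).2]

theorem MvPolynomial.eval_esymm_mul_eq_sum_finsuppAntidiag [DecidableEq τ] (x : σ → R)
    (y : τ → R) (k : ℕ) :
    eval (fun p : σ × τ => x p.1 * y p.2) (esymm (σ × τ) R k) =
      ∑ c ∈ finsuppAntidiag univ k, ∏ j, eval x (esymm σ R (c j)) * y j ^ c j := by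
  rw [eval_esymm_eq_coeff_prod, Fintype.prod_prod_type_right]
  simp_rw [prod_one_add_C_mul_mul_X_eq_mk, PowerSeries.coeff_prod, PowerSeries.coeff_mk]

theorem Finset.sum_finsuppAntidiag_univ_eq_sum_sym {M : Type*} [AddCommMonoid M] [DecidableEq τ]
    (k : ℕ) (g : (τ →₀ ℕ) → M) :
    ∑ c ∈ finsuppAntidiag univ k, g c = ∑ a : Sym τ k, g (Multiset.toFinsupp a) := by
  refine (sum_bij' (fun c hc => ⟨Finsupp.toMultiset c, ?_⟩) (fun a _ => Multiset.toFinsupp a)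
    (fun _ _ => mem_univ _) (fun a _ => ?_) (fun c _ => ?_) (fun a _ => ?_) (fun c _ => ?_))
  · rw [Finsupp.card_toMultiset, ← (mem_finsuppAntidiag'.1 hc).1]; rfl
  · exact mem_finsuppAntidiag'.2 ⟨(Multiset.toFinsupp_sum_eq _).trans a.2, subset_univ _⟩
  · simp
  · ext; simp
  · simp

theorem MvPolynomial.eval_esymmPart_ofSym [DecidableEq τ] (x : σ → R) {k : ℕ} (a : Sym τ k) :
    eval x (esymmPart σ R (.ofSym a)) =
      ∏ j, eval x (esymm σ R ((a : Multiset τ).count j)) := by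
  rw [esymmPart, map_multiset_prod]
  change ((((a : Multiset τ).toFinset.val.map (a : Multiset τ).count).map (esymm σ R)).map
    (eval x)).prod = _
  rw [Multiset.map_map, Multiset.map_map, ← prod_eq_multiset_prod]
  apply prod_subset (subset_univ _)
  intro j _ hj
  rw [Function.comp_apply, Function.comp_apply,
    Multiset.count_eq_zero.2 (Multiset.mem_toFinset.not.1 hj), esymm_zero, map_one]

theorem MvPolynomial.eval_prod_map_X [DecidableEq τ] (y : τ → R) (s : Multiset τ) :
    eval y (s.map (X : τ → MvPolynomial τ R)).prod = ∏ j, y j ^ s.count j := by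
  rw [map_multiset_prod, Multiset.map_map, Finset.prod_multiset_map_count]
  simp only [Function.comp_apply, eval_X]
  apply prod_subset (subset_univ _)
  intro j _ hj
  simp [Multiset.count_eq_zero.2 (Multiset.mem_toFinset.not.1 hj)]

theorem MvPolynomial.sum_esymmPart_mul_msymm_eq_sum_sym [DecidableEq τ] (x : σ → R)
    (y : τ → R) (k : ℕ) :
    ∑ μ : Nat.Partition k, eval x (esymmPart σ R μ) * eval y (msymm τ R μ) =
      ∑ a : Sym τ k, eval x (esymmPart σ R (.ofSym a)) *
        eval y ((a : Multiset τ).map (X : τ → MvPolynomial τ R)).prod := by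
  rw [← Fintype.sum_fiberwise fun a : Sym τ k => Nat.Partition.ofSym a]
  refine sum_congr rfl fun μ _ => ?_
  rw [msymm, map_sum, mul_sum]
  exact sum_congr rfl fun a _ => by rw [a.2]; rfl

theorem MvPolynomial.sum_esymmPart_mul_msymm [DecidableEq τ] (x : σ → R) (y : τ → R)
    (k : ℕ) :
    ∑ μ : Nat.Partition k, eval x (esymmPart σ R μ) * eval y (msymm τ R μ) =
      eval (fun p : σ × τ => x p.1 * y p.2) (esymm (σ × τ) R k) := by
  rw [sum_esymmPart_mul_msymm_eq_sum_sym, eval_esymm_mul_eq_sum_finsuppAntidiag,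
    sum_finsuppAntidiag_univ_eq_sum_sym]
  refine sum_congr rfl fun a _ => ?_
  simp [eval_esymmPart_ofSym, eval_prod_map_X, prod_mul_distrib]

theorem MvPolynomial.eval_psum_mul (x : σ → R) (y : τ → R) (k : ℕ) :
    eval (fun p : σ × τ => x p.1 * y p.2) (psum (σ × τ) R k) =
      eval x (psum σ R k) * eval y (psum τ R k) := by
  simp [psum, mul_pow, Fintype.sum_prod_type, sum_mul_sum]

end

theorem MvPolynomial.mul_esymm_eq_sum_range (σ : Type*) [Fintype σ] (R : Type*) [CommRing R]
    (k : ℕ) :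
    k * esymm σ R k = ∑ i ∈ range k, (-1) ^ (k - i - 1) * psum σ R (k - i) * esymm σ R i := by
  rw [mul_esymm_eq_sum, sum_filter, Nat.sum_antidiagonal_eq_sum_range_succ
    (fun i j => if i < k then (-1) ^ i * esymm σ R i * psum σ R j else 0), sum_range_succ,
    if_neg k.lt_irrefl, add_zero, mul_sum]
  refine sum_congr rfl fun i hi => ?_
  obtain ⟨d, rfl⟩ := Nat.exists_eq_add_of_lt (mem_range.1 hi)
  have hsign : ((-1) ^ (i + d + 1 + 1) * (-1) ^ i : MvPolynomial σ R) = (-1) ^ d := by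
    rw [← pow_add, show i + d + 1 + 1 + i = d + 2 * (i + 1) by ring, pow_add, pow_mul, neg_one_sq,
      one_pow, mul_one]
  rw [if_pos (mem_range.1 hi), show i + d + 1 - i = d + 1 by omega, Nat.add_sub_cancel]
  linear_combination esymm σ R i * psum σ R (d + 1) * hsign

theorem generalized_newton_girard_esymm_general {R : Type*} [CommRing R] (m l : ℕ)
    (x : Fin m → R) (y : Fin l → R) (n : ℕ) :
    (n : R) * ∑ μ : Nat.Partition n,
        eval x (esymmPart (Fin m) R μ) * eval y (msymm (Fin l) R μ) =
      ∑ k ∈ range n, (-1 : R) ^ (n - k - 1) *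
        eval x (psum (Fin m) R (n - k)) * eval y (psum (Fin l) R (n - k)) *
        ∑ μ : Nat.Partition k, eval x (esymmPart (Fin m) R μ) * eval y (msymm (Fin l) R μ) := by
  have newton := congrArg (eval fun p : Fin m × Fin l => x p.1 * y p.2)
    (mul_esymm_eq_sum_range (Fin m × Fin l) R n)
  simpa [sum_esymmPart_mul_msymm, eval_psum_mul, mul_assoc] using newton

/-- Generalized Newton–Girard identity (Theorem 4, second):
`n·Σ_{λ ⊢ n} e_λ(x) m_λ(y) = Σ_{k=0}^{n-1} (-1)^(n-k-1) p_{n-k}(x) p_{n-k}(y) Σ_{λ ⊢ k} e_λ(x) m_λ(y)`. -/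
theorem generalized_newton_girard_esymm {R : Type*} [CommRing R] (m l : ℕ)
    (x : Fin m → R) (y : Fin l → R) (n : ℕ) (hn : 1 ≤ n) :
    (n : R) * ∑ μ : Nat.Partition n,
        eval x (esymmPart (Fin m) R μ) * eval y (msymm (Fin l) R μ) =
      ∑ k ∈ range n, (-1 : R) ^ (n - k - 1) *
        eval x (psum (Fin m) R (n - k)) * eval y (psum (Fin l) R (n - k)) *
        ∑ μ : Nat.Partition k, eval x (esymmPart (Fin m) R μ) * eval y (msymm (Fin l) R μ) :=
  generalized_newton_girard_esymm_general m l x y n
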